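/- For every Z ∈ H²×H² there exists λ > 0 such that for every g ∈ Γ, if the open Euclidean ball B(Z,λ) meets g(F) then Z ∈ g(F). -/

import Mathlib

/-!
If `g(F)` meets a small closed ball `B` around `Z`, then `g` maps some `z ∈ F` into `B`.
Writing `(c, d)` for the bottom row of `g`, the condition `‖cz + d‖ ≥ 1` defining `F₀` bounds the
height `y₁y₂` of `z` from below, and the same norm for `g⁻¹` (bottom row `(-c, a)`), together with
`|N(t)| ≥ 1` for `t ≠ 0` in `R`, bounds it from above. With the bounds on `r`, `s₁`, `s₂` in `F_∞`
this confines `z` to a compact box `K ⊂ H²×H²`. A real Möbius transformation moving a point of a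
compact subset of `H²` into another one has bounded entries, and `R` is discrete in `ℝ²`, so only
finitely many `g` occur. Each `g(F ∩ K)` is compact, so those not containing `Z` keep a positive
distance from `Z`.
-/

noncomputable section

open scoped Classical
open MeasureTheory

namespace Hilbert

/-- `k₀ = 2` if `k ≡ 1 (mod 4)` and `k₀ = 1` otherwise. -/
def k0 (k : ℕ) : ℝ := if k % 4 = 1 then 2 else 1

/-- `ω = (1 + √k)/k₀`. -/
def omg (k : ℕ) : ℝ := (1 + Real.sqrt k) / k0 k

/-- `ω' = (1 - √k)/k₀`, the algebraic conjugate of `ω`. -/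
def omg' (k : ℕ) : ℝ := (1 - Real.sqrt k) / k0 k

/-- The ring `R = ℤ[ω]`, realized inside `ℝ × ℝ` via the pair of real embeddings
`α ↦ (α, α')` of `K = ℚ(√k)`. -/
def R (k : ℕ) : Subring (ℝ × ℝ) := Subring.closure {(omg k, omg' k)}

/-- The ambient space `ℝ⁴`, with coordinates `(x₁, x₂, y₁, y₂)`. -/
abbrev Pt : Type := ℝ × ℝ × ℝ × ℝ

def x1 (p : Pt) : ℝ := p.1
def x2 (p : Pt) : ℝ := p.2.1
def y1 (p : Pt) : ℝ := p.2.2.1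
def y2 (p : Pt) : ℝ := p.2.2.2

/-- `H² × H²`, identified with an open subset of `ℝ⁴`. -/
def HH : Set Pt := {p | 0 < y1 p ∧ 0 < y2 p}

/-- The coordinate `s₁`, determined by `x₁ = s₁ + s₂ ω`, `x₂ = s₁ + s₂ ω'`. -/
def s1 (k : ℕ) (p : Pt) : ℝ := (omg' k * x1 p - omg k * x2 p) / (omg' k - omg k)

/-- The coordinate `s₂`. -/
def s2 (k : ℕ) (p : Pt) : ℝ := (x1 p - x2 p) / (omg k - omg' k)

/-- The ratio `r = y₁/y₂`. -/
def rr (p : Pt) : ℝ := y1 p / y2 p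

/-- The height `h = y₁ y₂`. -/
def hh (p : Pt) : ℝ := y1 p * y2 p

/-- `‖cZ+d‖ = ((cx₁+d)² + c²y₁²)((c'x₂+d')² + c'²y₂²)`, where `c = (c, c')`, `d = (d, d')`
are given by their two real embeddings. -/
def HNorm (c d : ℝ × ℝ) (p : Pt) : ℝ :=
  ((c.1 * x1 p + d.1) ^ 2 + c.1 ^ 2 * y1 p ^ 2) *
    ((c.2 * x2 p + d.2) ^ 2 + c.2 ^ 2 * y2 p ^ 2)

/-- `S = {(c,d) ∈ R² : cR + dR = R}`. -/
def Spairs (k : ℕ) : Set (R k × R k) := {cd | Ideal.span {cd.1, cd.2} = ⊤}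

/-- `V_{c,d}^≥ = {Z ∈ H²×H² : ‖cZ+d‖ ≥ 1}`. -/
def Vge (k : ℕ) (cd : R k × R k) : Set Pt :=
  {p ∈ HH | 1 ≤ HNorm (cd.1 : ℝ × ℝ) (cd.2 : ℝ × ℝ) p}

/-- `V_{c,d}^≤ = {Z ∈ H²×H² : ‖cZ+d‖ ≤ 1}`. -/
def Vle (k : ℕ) (cd : R k × R k) : Set Pt :=
  {p ∈ HH | HNorm (cd.1 : ℝ × ℝ) (cd.2 : ℝ × ℝ) p ≤ 1}

/-- `V_{c,d} = {Z ∈ H²×H² : ‖cZ+d‖ = 1}`. -/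
def Veq (k : ℕ) (cd : R k × R k) : Set Pt :=
  {p ∈ HH | HNorm (cd.1 : ℝ × ℝ) (cd.2 : ℝ × ℝ) p = 1}

/-- `F₀ = {Z ∈ H²×H² : ‖cZ+d‖ ≥ 1 for all (c,d) ∈ S}`. -/
def F0 (k : ℕ) : Set Pt :=
  {p ∈ HH | ∀ cd ∈ Spairs k, 1 ≤ HNorm (cd.1 : ℝ × ℝ) (cd.2 : ℝ × ℝ) p}

/-- `F_∞ = {(s₁,s₂,r,h) : |s₁| ≤ 1/2, |s₂| ≤ 1/2, ε₀⁻² ≤ r ≤ ε₀²}`, where `ε` stands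
for the fundamental unit `ε₀`. -/
def FInf (k : ℕ) (ε : ℝ) : Set Pt :=
  {p ∈ HH | |s1 k p| ≤ 1 / 2 ∧ |s2 k p| ≤ 1 / 2 ∧ (ε ^ 2)⁻¹ ≤ rr p ∧ rr p ≤ ε ^ 2}

/-- `F = F_∞ ∩ F₀`. -/
def F (k : ℕ) (ε : ℝ) : Set Pt := FInf k ε ∩ F0 k

/-- `SL₂(R)`. -/
abbrev SL (k : ℕ) := Matrix.SpecialLinearGroup (Fin 2) (R k)

/-- Möbius action on the upper half-plane: image of `x + y i` under `(a b; c d)`. -/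
def moeb (a b c d x y : ℝ) : ℝ × ℝ :=
  (((a * x + b) * (c * x + d) + a * c * y ^ 2) / ((c * x + d) ^ 2 + c ^ 2 * y ^ 2),
    y / ((c * x + d) ^ 2 + c ^ 2 * y ^ 2))

/-- The action of `γ ∈ SL₂(R)` on `H²×H²`: `γ` acts on the first factor through the first
embedding and through the conjugate matrix `γ'` (second embedding) on the second factor.
This descends to the Hilbert modular group `PSL₂(R)`. -/
def act (k : ℕ) (g : SL k) (p : Pt) : Pt :=
  ((moeb (g.1 0 0 : ℝ × ℝ).1 (g.1 0 1 : ℝ × ℝ).1 (g.1 1 0 : ℝ × ℝ).1 (g.1 1 1 : ℝ × ℝ).1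
      (x1 p) (y1 p)).1,
   (moeb (g.1 0 0 : ℝ × ℝ).2 (g.1 0 1 : ℝ × ℝ).2 (g.1 1 0 : ℝ × ℝ).2 (g.1 1 1 : ℝ × ℝ).2
      (x2 p) (y2 p)).1,
   (moeb (g.1 0 0 : ℝ × ℝ).1 (g.1 0 1 : ℝ × ℝ).1 (g.1 1 0 : ℝ × ℝ).1 (g.1 1 1 : ℝ × ℝ).1
      (x1 p) (y1 p)).2,
   (moeb (g.1 0 0 : ℝ × ℝ).2 (g.1 0 1 : ℝ × ℝ).2 (g.1 1 0 : ℝ × ℝ).2 (g.1 1 1 : ℝ × ℝ).2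
      (x2 p) (y2 p)).2)

/-- The pair of real embeddings of a unit of `R`. -/
def unitVal (k : ℕ) (u : (R k)ˣ) : ℝ × ℝ := ((u : R k) : ℝ × ℝ)

/-- `e` is the fundamental unit of `R`: the smallest unit of `R` greater than `1`
(with respect to the first embedding). -/
def IsFundUnit (k : ℕ) (e : (R k)ˣ) : Prop :=
  1 < (unitVal k e).1 ∧
    ∀ v : (R k)ˣ, 1 < (unitVal k v).1 → (unitVal k e).1 ≤ (unitVal k v).1

/-- The real number `ε₀ > 1`, the fundamental unit under the first embedding. -/
def eps (k : ℕ) (e : (R k)ˣ) : ℝ := (unitVal k e).1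


/-- The norm `N(c) = c c'` of an element of `R` (as a real number). -/
def Nm (k : ℕ) (c : R k) : ℝ := ((c : ℝ × ℝ)).1 * ((c : ℝ × ℝ)).2

/-- A subset `C` of `H²×H²` is hyperbolically bounded if it is bounded in the
Euclidean metric and `y₁, y₂ > ε` on `C` for some `ε > 0`. -/
def HypBounded (C : Set Pt) : Prop :=
  C ⊆ HH ∧ Bornology.IsBounded C ∧ ∃ ε > (0 : ℝ), ∀ p ∈ C, ε < y1 p ∧ ε < y2 p

/-- `V_{C,μ} = {(c,d) ∈ R × R : ‖cZ+d‖ ≤ μ for some Z ∈ C}`. -/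
def VCmu (k : ℕ) (C : Set Pt) (μ : ℝ) : Set (R k × R k) :=
  {cd | ∃ p ∈ C, HNorm (cd.1 : ℝ × ℝ) (cd.2 : ℝ × ℝ) p ≤ μ}

/-- The conditions (8) of Theorem `FiniteSides` on a pair `(c,d) ∈ R²`. -/
def SCond (k : ℕ) (ε : ℝ) (cd : R k × R k) : Prop :=
  cd.1 ≠ 0 ∧ Ideal.span {cd.1, cd.2} = ⊤ ∧
    |Nm k cd.1| ≤ 2 * k / (k0 k) ^ 2 ∧
    |((cd.2 : ℝ × ℝ)).1 / ((cd.1 : ℝ × ℝ)).1| <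
      ε * Real.sqrt (2 * k / (Nm k cd.1 ^ 2 * (k0 k) ^ 2) - (k0 k) ^ 2 / (2 * k)) +
        (1 + omg k) / 2 ∧
    |((cd.2 : ℝ × ℝ)).2 / ((cd.1 : ℝ × ℝ)).2| <
      ε * Real.sqrt (2 * k / (Nm k cd.1 ^ 2 * (k0 k) ^ 2) - (k0 k) ^ 2 / (2 * k)) +
        (1 - omg' k) / 2

/-- `S₁` is a set of representatives, up to multiplication by units of `R`, of the pairs
`(c,d) ∈ R²` satisfying the conditions `SCond`. -/
def IsRepSet (k : ℕ) (ε : ℝ) (S1 : Set (R k × R k)) : Prop :=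
  (∀ cd ∈ S1, SCond k ε cd) ∧
    (∀ cd : R k × R k, SCond k ε cd →
      ∃ ab ∈ S1, ∃ u : (R k)ˣ, cd.1 = (u : R k) * ab.1 ∧ cd.2 = (u : R k) * ab.2) ∧
    (∀ ab ∈ S1, ∀ ab' ∈ S1,
      (∃ u : (R k)ˣ, ab'.1 = (u : R k) * ab.1 ∧ ab'.2 = (u : R k) * ab.2) → ab = ab')

/-- The family `𝒱_∞ = {V_i^± : i = 1,2,3}`. -/
def VfamInf (k : ℕ) (ε : ℝ) : Set (Set Pt) :=
  { {p ∈ HH | s1 k p = 1 / 2}, {p ∈ HH | s1 k p = -(1 / 2)},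
    {p ∈ HH | s2 k p = 1 / 2}, {p ∈ HH | s2 k p = -(1 / 2)},
    {p ∈ HH | rr p = ε ^ 2}, {p ∈ HH | rr p = (ε ^ 2)⁻¹} }

/-- The family `𝒱 = {V_{c,d} : (c,d) ∈ S, c ≠ 0}`. -/
def Vfam (k : ℕ) : Set (Set Pt) :=
  {V | ∃ cd ∈ Spairs k, cd.1 ≠ 0 ∧ V = Veq k cd}

/-- The family `𝓜 = {γ(M) : γ ∈ Γ, M ∈ 𝒱 ∪ 𝒱_∞}`. -/
def Mfam (k : ℕ) (ε : ℝ) : Set (Set Pt) :=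
  {M | ∃ g : SL k, ∃ V ∈ Vfam k ∪ VfamInf k ε, M = act k g '' V}

/-- `ω` as an element of `R`. -/
def omR (k : ℕ) : R k := ⟨(omg k, omg' k), Subring.subset_closure rfl⟩

/-- The side-pairing transformations: `γ ≠ 1` (in `PSL₂(R)`) such that `F ∩ γ⁻¹(F)` has
Hausdorff dimension `3`. -/
def SidePairings (k : ℕ) (ε : ℝ) : Set (SL k) :=
  {g | g ≠ 1 ∧ g.1 ≠ -1 ∧ dimH (F k ε ∩ act k g⁻¹ '' F k ε) = 3}

theorem int_add_int_mul_ne_zero {w : ℝ} (hw : Irrational w) {m n : ℤ} (h : m ≠ 0 ∨ n ≠ 0) :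
    (m : ℝ) + n * w ≠ 0 := by
  rcases eq_or_ne n 0 with rfl | hn
  · simpa using h
  · exact ((hw.intCast_mul hn).intCast_add m).ne_zero

theorem abs_le_one_add_sq (t : ℝ) : |t| ≤ 1 + t ^ 2 := by
  nlinarith [sq_abs t, sq_nonneg (|t| - 1)]

section Arithmetic

theorem exists_int_omg_add_eq_and_omg_mul_eq (k : ℕ) :
    ∃ T N : ℤ, omg k + omg' k = T ∧ omg k * omg' k = N := by
  have hk : Real.sqrt k ^ 2 = k := Real.sq_sqrt (Nat.cast_nonneg k)
  unfold omg omg' k0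
  split_ifs with h
  · obtain ⟨q, rfl⟩ : ∃ q, k = 4 * q + 1 := ⟨k / 4, by omega⟩
    push_cast at hk ⊢
    exact ⟨1, -q, by push_cast; ring, by push_cast; linear_combination -hk / 4⟩
  · exact ⟨2, 1 - k, by push_cast; ring, by push_cast; linear_combination -hk⟩

variable {k : ℕ}

theorem exists_int_coe_eq (t : R k) :
    ∃ m n : ℤ, (t : ℝ × ℝ) = (m + n * omg k, m + n * omg' k) := by
  obtain ⟨T, N, hT, hN⟩ := exists_int_omg_add_eq_and_omg_mul_eq k
  obtain ⟨x, hx⟩ := t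
  change ∃ m n : ℤ, x = _
  induction hx using Subring.closure_induction with
  | mem y hy => exact ⟨0, 1, by simp [Set.mem_singleton_iff.mp hy]⟩
  | zero => exact ⟨0, 0, by ext <;> simp⟩
  | one => exact ⟨1, 0, by ext <;> simp⟩
  | add y z _ _ hy hz =>
    obtain ⟨⟨m, n, rfl⟩, ⟨m', n', rfl⟩⟩ := And.intro hy hz
    exact ⟨m + m', n + n', by ext <;> simp only [Prod.fst_add, Prod.snd_add] <;> push_cast <;> ring⟩
  | neg y _ hy =>
    obtain ⟨m, n, rfl⟩ := hy
    exact ⟨-m, -n, by ext <;> simp only [Prod.fst_neg, Prod.snd_neg] <;> push_cast <;> ring⟩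
  | mul y z _ _ hy hz =>
    obtain ⟨⟨m, n, rfl⟩, ⟨m', n', rfl⟩⟩ := And.intro hy hz
    refine ⟨m * m' - n * n' * N, m * n' + n * m' + n * n' * T, Prod.ext ?_ ?_⟩ <;>
      simp only [Prod.fst_mul, Prod.snd_mul] <;> push_cast
    · linear_combination (n * n' * omg k : ℝ) * hT - (n * n' : ℝ) * hN
    · linear_combination (n * n' * omg' k : ℝ) * hT - (n * n' : ℝ) * hN

theorem irrational_omg (hk : Squarefree k) (hk1 : 1 < k) :
    Irrational (omg k) ∧ Irrational (omg' k) := by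
  have hsqrt : Irrational (Real.sqrt k) := by
    rw [irrational_sqrt_natCast_iff]
    rintro ⟨a, rfl⟩
    have := Nat.isUnit_iff.mp (hk a ⟨1, by ring⟩)
    subst this
    omega
  have h0 : k0 k = ((if k % 4 = 1 then 2 else 1 : ℕ) : ℝ) := by unfold k0; split_ifs <;> simp
  have hne : (if k % 4 = 1 then 2 else 1 : ℕ) ≠ 0 := by split_ifs <;> simp
  unfold omg omg'
  rw [h0]
  exact ⟨by simpa using (hsqrt.natCast_add 1).div_natCast hne,
    by simpa [sub_eq_add_neg] using (hsqrt.neg.natCast_add 1).div_natCast hne⟩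

theorem coe_fst_ne_zero_and_coe_snd_ne_zero (hk : Squarefree k) (hk1 : 1 < k)
    {t : R k} (ht : t ≠ 0) : (t : ℝ × ℝ).1 ≠ 0 ∧ (t : ℝ × ℝ).2 ≠ 0 := by
  obtain ⟨m, n, hmn⟩ := exists_int_coe_eq t
  have h : m ≠ 0 ∨ n ≠ 0 := by
    by_contra! h
    exact ht (Subtype.ext (by simp [hmn, h.1, h.2]))
  rw [hmn]
  exact ⟨int_add_int_mul_ne_zero (irrational_omg hk hk1).1 h,
    int_add_int_mul_ne_zero (irrational_omg hk hk1).2 h⟩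

theorem exists_int_Nm_eq (t : R k) : ∃ j : ℤ, Nm k t = j := by
  obtain ⟨T, N, hT, hN⟩ := exists_int_omg_add_eq_and_omg_mul_eq k
  obtain ⟨m, n, hmn⟩ := exists_int_coe_eq t
  refine ⟨m * m + m * n * T + n * n * N, ?_⟩
  rw [Nm, hmn]
  push_cast
  linear_combination (m * n : ℝ) * hT + (n * n : ℝ) * hN

theorem one_le_Nm_sq (hk : Squarefree k) (hk1 : 1 < k) {t : R k} (ht : t ≠ 0) :
    1 ≤ Nm k t ^ 2 := by
  obtain ⟨j, hj⟩ := exists_int_Nm_eq t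
  obtain ⟨h1, h2⟩ := coe_fst_ne_zero_and_coe_snd_ne_zero hk hk1 ht
  have hj0 : j ≠ 0 := by
    rintro rfl
    exact mul_ne_zero h1 h2 (hj.trans Int.cast_zero)
  rw [hj, one_le_sq_iff_one_le_abs]
  exact_mod_cast Int.one_le_abs hj0

theorem omg'_lt_omg (hk1 : 1 < k) : omg' k < omg k := by
  have : 0 < Real.sqrt k := Real.sqrt_pos.mpr (by exact_mod_cast (by omega : 0 < k))
  have : 0 < k0 k := by unfold k0; split_ifs <;> norm_num
  unfold omg omg'
  gcongr
  linarith

theorem finite_setOf_abs_coe_le (hk1 : 1 < k) (A : ℝ) :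
    {t : R k | |(t : ℝ × ℝ).1| ≤ A ∧ |(t : ℝ × ℝ).2| ≤ A}.Finite := by
  have hω := sub_pos.mpr (omg'_lt_omg hk1)
  set B := 2 * A / (omg k - omg' k)
  set L := ⌈A + B * (1 + |omg k|)⌉
  refine Set.Finite.of_finite_image (f := ((↑) : R k → ℝ × ℝ)) ?_ Subtype.val_injective.injOn
  refine (((Set.finite_Icc (-L) L).prod (Set.finite_Icc (-L) L)).image
    fun mn : ℤ × ℤ => ((mn.1 + mn.2 * omg k : ℝ), (mn.1 + mn.2 * omg' k : ℝ))).subset ?_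
  rintro _ ⟨t, ⟨h1, h2⟩, rfl⟩
  obtain ⟨m, n, hmn⟩ := exists_int_coe_eq t
  rw [hmn] at h1 h2 ⊢
  have hn : |(n : ℝ)| ≤ B := by
    rw [le_div_iff₀ hω, ← abs_of_pos hω, ← abs_mul]
    calc |(n : ℝ) * (omg k - omg' k)| = |(m + n * omg k) - (m + n * omg' k)| := by ring_nf
      _ ≤ 2 * A := by linarith [abs_sub (m + n * omg k : ℝ) (m + n * omg' k)]
  have hm : |(m : ℝ)| ≤ A + B * |omg k| := by
    calc |(m : ℝ)| = |(m + n * omg k) - n * omg k| := by ring_nf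
      _ ≤ |(m + n * omg k : ℝ)| + |(n : ℝ)| * |omg k| := by rw [← abs_mul]; exact abs_sub _ _
      _ ≤ A + B * |omg k| := by gcongr
  have hL : ∀ j : ℤ, |(j : ℝ)| ≤ A + B * (1 + |omg k|) → j ∈ Set.Icc (-L) L := by
    intro j hj
    have : |j| ≤ L := by exact_mod_cast hj.trans (Int.le_ceil _)
    exact abs_le.mp this
  have hA : 0 ≤ A := (abs_nonneg _).trans h1
  have hB : 0 ≤ B := (abs_nonneg _).trans hn
  exact ⟨(m, n), ⟨hL m (by nlinarith [abs_nonneg (omg k)]),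
    hL n (by nlinarith [abs_nonneg (omg k)])⟩, rfl⟩

end Arithmetic

section Moebius

variable {a b c d x y : ℝ}

theorem moeb_den_pos (hdet : a * d - b * c = 1) (hy : 0 < y) :
    0 < (c * x + d) ^ 2 + c ^ 2 * y ^ 2 := by
  rcases eq_or_ne c 0 with rfl | hc
  · have : d ≠ 0 := by rintro rfl; simp at hdet
    simpa using sq_pos_of_ne_zero this
  · positivity

theorem moeb_fst_mul_sub (hdet : a * d - b * c = 1) (hy : 0 < y) :
    (moeb a b c d x y).1 * (c * x + d) - c * y * (moeb a b c d x y).2 = a * x + b := by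
  simp only [moeb]
  rw [div_mul_eq_mul_div, mul_div_assoc', div_sub_div_same,
    div_eq_iff (moeb_den_pos hdet hy).ne']
  linear_combination (c * y ^ 2) * hdet

/-- The first factor is the denominator of the inverse matrix `(d, -b; -c, a)` at the image
point, so on `H² × H²` this reads `‖(-c) (g z) + a‖ ‖c z + d‖ = 1`. -/
theorem moeb_inv_den_mul_den (hdet : a * d - b * c = 1) (hy : 0 < y) :
    ((-c * (moeb a b c d x y).1 + a) ^ 2 + (-c) ^ 2 * (moeb a b c d x y).2 ^ 2) *
      ((c * x + d) ^ 2 + c ^ 2 * y ^ 2) = 1 := by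
  have hD := (moeb_den_pos (x := x) hdet hy).ne'
  have h : -c * (moeb a b c d x y).1 + a = (c * x + d) / ((c * x + d) ^ 2 + c ^ 2 * y ^ 2) := by
    simp only [moeb]
    field_simp
    linear_combination (c * x + d) * hdet
  rw [h, neg_sq, moeb]
  field_simp

theorem exists_abs_le_of_moeb_mem (X m Y : ℝ) (hm : 0 < m) :
    ∃ A, ∀ a b c d x y : ℝ, a * d - b * c = 1 → |x| ≤ X → m ≤ y → y ≤ Y →
      |(moeb a b c d x y).1| ≤ X → m ≤ (moeb a b c d x y).2 → (moeb a b c d x y).2 ≤ Y →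
      |a| ≤ A ∧ |b| ≤ A ∧ |c| ≤ A ∧ |d| ≤ A := by
  set C := 1 + Y / m / m ^ 2
  set E := 1 + Y / m
  refine ⟨max (max C (E + C * X)) (X * E + C * (Y * Y) + (E + C * X) * X), ?_⟩
  intro a b c d x y hdet hx hmy hyY hx' hmy' hy'Y
  set x' := (moeb a b c d x y).1
  set y' := (moeb a b c d x y).2
  set D := (c * x + d) ^ 2 + c ^ 2 * y ^ 2
  have hy : 0 < y := hm.trans_le hmy
  have hy' : 0 < y' := hm.trans_le hmy'
  have hY : 0 ≤ Y := hy.le.trans hyY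
  have hX : 0 ≤ X := (abs_nonneg x).trans hx
  have hC : 0 ≤ C := by positivity
  have hD : 0 < D := moeb_den_pos hdet hy
  have hy'D : y' * D = y := div_mul_cancel₀ y hD.ne'
  have hDle : D ≤ Y / m := by
    rw [eq_div_of_mul_eq hy'.ne' ((mul_comm _ _).trans hy'D)]
    exact div_le_div₀ hY hyY hm hmy'
  have hD'le : (-c * x' + a) ^ 2 + (-c) ^ 2 * y' ^ 2 ≤ Y / m := by
    have hinv := moeb_inv_den_mul_den (x := x) hdet hy
    have hQ : (-c * x' + a) ^ 2 + (-c) ^ 2 * y' ^ 2 = y' / y :=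
      eq_div_of_mul_eq hy.ne' (by rw [← hy'D]; linear_combination y' * hinv)
    rw [hQ]
    exact div_le_div₀ hY hy'Y hm hmy
  have hc : |c| ≤ C := by
    have hc2 : c ^ 2 ≤ Y / m / m ^ 2 := by
      rw [le_div_iff₀ (by positivity)]
      calc c ^ 2 * m ^ 2 ≤ c ^ 2 * y ^ 2 := by gcongr
        _ ≤ D := le_add_of_nonneg_left (sq_nonneg _)
        _ ≤ Y / m := hDle
    linarith [abs_le_one_add_sq c]
  have hcxd : |c * x + d| ≤ E := by
    linarith [abs_le_one_add_sq (c * x + d), sq_nonneg (c * y)]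
  have hcx' : |-c * x' + a| ≤ E := by
    linarith [abs_le_one_add_sq (-c * x' + a), sq_nonneg (c * y')]
  have hd : |d| ≤ E + C * X := by
    calc |d| = |(c * x + d) - c * x| := by ring_nf
      _ ≤ |c * x + d| + |c| * |x| := by rw [← abs_mul]; exact abs_sub _ _
      _ ≤ E + C * X := by gcongr
  have ha : |a| ≤ E + C * X := by
    calc |a| = |(-c * x' + a) + c * x'| := by ring_nf
      _ ≤ |-c * x' + a| + |c| * |x'| := by rw [← abs_mul]; exact abs_add_le _ _
      _ ≤ E + C * X := by gcongr
  have hb : |b| ≤ X * E + C * (Y * Y) + (E + C * X) * X := by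
    have hb : b = x' * (c * x + d) - c * (y * y') - a * x := by
      linear_combination (moeb_fst_mul_sub (x := x) hdet hy).symm
    have h1 := abs_sub (x' * (c * x + d) - c * (y * y')) (a * x)
    have h2 := abs_sub (x' * (c * x + d)) (c * (y * y'))
    have h3 := mul_le_mul hx' hcxd (abs_nonneg _) hX
    have h4 := mul_le_mul hc (mul_le_mul hyY hy'Y hy'.le hY) (by positivity) hC
    have h5 := mul_le_mul ha hx (abs_nonneg _) (by positivity)
    simp only [abs_mul, abs_of_pos hy, abs_of_pos hy'] at h1 h2
    rw [hb]
    linarith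
  exact ⟨ha.trans (le_max_of_le_left (le_max_right _ _)), hb.trans (le_max_right _ _),
    hc.trans (le_max_of_le_left (le_max_left _ _)), hd.trans (le_max_of_le_left (le_max_right _ _))⟩

end Moebius

section Action

variable {k : ℕ}

theorem det_coe (g : SL k) :
    (g.1 0 0 : ℝ × ℝ).1 * (g.1 1 1 : ℝ × ℝ).1 - (g.1 0 1 : ℝ × ℝ).1 * (g.1 1 0 : ℝ × ℝ).1 = 1 ∧
      (g.1 0 0 : ℝ × ℝ).2 * (g.1 1 1 : ℝ × ℝ).2 - (g.1 0 1 : ℝ × ℝ).2 * (g.1 1 0 : ℝ × ℝ).2 =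
        1 := by
  have h := congrArg (fun t : R k => (t : ℝ × ℝ)) ((Matrix.det_fin_two _).symm.trans g.2)
  simpa [Prod.ext_iff] using h

theorem bottomRow_mem_Spairs (g : SL k) : (g.1 1 0, g.1 1 1) ∈ Spairs k := by
  rw [Spairs, Set.mem_ofPred_eq, Ideal.eq_top_iff_one, Ideal.mem_span_pair]
  exact ⟨-g.1 0 1, g.1 0 0, by linear_combination (Matrix.det_fin_two _).symm.trans g.2⟩

theorem act_mem_HH (g : SL k) {z : Pt} (hz : z ∈ HH) : act k g z ∈ HH :=
  ⟨div_pos hz.1 (moeb_den_pos (det_coe g).1 hz.1), div_pos hz.2 (moeb_den_pos (det_coe g).2 hz.2)⟩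

theorem hh_act_mul_HNorm (g : SL k) {z : Pt} (hz : z ∈ HH) :
    hh (act k g z) * HNorm (g.1 1 0) (g.1 1 1) z = hh z := by
  have key : ∀ y₁ y₂ D₁ D₂ : ℝ, D₁ ≠ 0 → D₂ ≠ 0 → y₁ / D₁ * (y₂ / D₂) * (D₁ * D₂) = y₁ * y₂ := by
    intros; field_simp
  exact key _ _ _ _ (moeb_den_pos (det_coe g).1 hz.1).ne' (moeb_den_pos (det_coe g).2 hz.2).ne'

theorem HNorm_act_mul_HNorm (g : SL k) {z : Pt} (hz : z ∈ HH) :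
    HNorm (-g.1 1 0 : R k) (g.1 0 0) (act k g z) * HNorm (g.1 1 0) (g.1 1 1) z = 1 := by
  have key : ∀ P₁ P₂ D₁ D₂ : ℝ, P₁ * D₁ = 1 → P₂ * D₂ = 1 → P₁ * P₂ * (D₁ * D₂) = 1 := by
    intro P₁ P₂ D₁ D₂ h₁ h₂
    linear_combination P₂ * D₂ * h₁ + h₂
  exact key _ _ _ _ (moeb_inv_den_mul_den (det_coe g).1 hz.1)
    (moeb_inv_den_mul_den (det_coe g).2 hz.2)

end Action

section Heights

variable {k : ℕ}

theorem min_one_le_HNorm (hk : Squarefree k) (hk1 : 1 < k) {c d : R k} (hcd : c ≠ 0 ∨ d ≠ 0)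
    (z : Pt) : min 1 (hh z ^ 2) ≤ HNorm c d z := by
  rcases eq_or_ne c 0 with rfl | hc
  · have hd := hcd.resolve_left (not_not.mpr rfl)
    refine (min_le_left _ _).trans ((one_le_Nm_sq hk hk1 hd).trans_eq ?_)
    simp [Nm, HNorm]
    ring
  · have hc1 : (c : ℝ × ℝ).1 ^ 2 * y1 z ^ 2 ≤ ((c : ℝ × ℝ).1 * x1 z + (d : ℝ × ℝ).1) ^ 2 +
        (c : ℝ × ℝ).1 ^ 2 * y1 z ^ 2 := le_add_of_nonneg_left (sq_nonneg _)
    have hc2 : (c : ℝ × ℝ).2 ^ 2 * y2 z ^ 2 ≤ ((c : ℝ × ℝ).2 * x2 z + (d : ℝ × ℝ).2) ^ 2 +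
        (c : ℝ × ℝ).2 ^ 2 * y2 z ^ 2 := le_add_of_nonneg_left (sq_nonneg _)
    calc min 1 (hh z ^ 2) ≤ hh z ^ 2 := min_le_right _ _
      _ ≤ Nm k c ^ 2 * hh z ^ 2 := le_mul_of_one_le_left (sq_nonneg _) (one_le_Nm_sq hk hk1 hc)
      _ = (c : ℝ × ℝ).1 ^ 2 * y1 z ^ 2 * ((c : ℝ × ℝ).2 ^ 2 * y2 z ^ 2) := by
        rw [Nm, hh]; ring
      _ ≤ HNorm c d z := mul_le_mul hc1 hc2 (by positivity) (by positivity)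

theorem hh_act_le (g : SL k) {z : Pt} (hz : z ∈ F0 k) : hh (act k g z) ≤ hh z := by
  rw [← hh_act_mul_HNorm g hz.1]
  have hq := act_mem_HH g hz.1
  exact le_mul_of_one_le_right (mul_pos hq.1 hq.2).le (hz.2 _ (bottomRow_mem_Spairs g))

theorem hh_mul_min_le_hh_act (hk : Squarefree k) (hk1 : 1 < k) (g : SL k) {z : Pt}
    (hz : z ∈ HH) : hh z * min 1 (hh (act k g z) ^ 2) ≤ hh (act k g z) := by
  have hca : -g.1 1 0 ≠ 0 ∨ g.1 0 0 ≠ 0 := by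
    by_contra! h
    have hdet := g.2
    rw [Matrix.det_fin_two, neg_eq_zero.mp h.1, h.2] at hdet
    simp at hdet
  have hz' : 0 ≤ hh z := (mul_pos hz.1 hz.2).le
  calc hh z * min 1 (hh (act k g z) ^ 2)
      ≤ hh z * HNorm (-g.1 1 0 : R k) (g.1 0 0) (act k g z) :=
        mul_le_mul_of_nonneg_left (min_one_le_HNorm hk hk1 hca _) hz'
    _ = hh (act k g z) := by
        rw [← hh_act_mul_HNorm g hz]
        linear_combination hh (act k g z) * HNorm_act_mul_HNorm g hz

end Heights

def box (X m Y : ℝ) : Set Pt := Set.Icc (-X, -X, m, m) (X, X, Y, Y)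

theorem mem_box {X m Y : ℝ} {z : Pt} :
    z ∈ box X m Y ↔ |x1 z| ≤ X ∧ |x2 z| ≤ X ∧ m ≤ y1 z ∧ y1 z ≤ Y ∧ m ≤ y2 z ∧ y2 z ≤ Y := by
  simp only [box, Set.mem_Icc, Prod.le_def, abs_le, x1, x2, y1, y2]
  tauto

theorem box_subset_HH {X m Y : ℝ} (hm : 0 < m) : box X m Y ⊆ HH := fun _ hz =>
  ⟨hm.trans_le (mem_box.mp hz).2.2.1, hm.trans_le (mem_box.mp hz).2.2.2.2.1⟩

theorem box_mono {X m Y X' m' Y' : ℝ} (hX : X ≤ X') (hm : m' ≤ m) (hY : Y ≤ Y') :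
    box X m Y ⊆ box X' m' Y' :=
  Set.Icc_subset_Icc ⟨neg_le_neg hX, neg_le_neg hX, hm, hm⟩ ⟨hX, hX, hY, hY⟩

theorem abs_coords_le_norm (w : Pt) :
    |x1 w| ≤ ‖w‖ ∧ |x2 w| ≤ ‖w‖ ∧ |y1 w| ≤ ‖w‖ ∧ |y2 w| ≤ ‖w‖ :=
  ⟨norm_fst_le w, (norm_fst_le _).trans (norm_snd_le w),
    (norm_fst_le _).trans ((norm_snd_le _).trans (norm_snd_le w)),
    (norm_snd_le _).trans ((norm_snd_le _).trans (norm_snd_le w))⟩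

theorem closedBall_subset_box (p : Pt) (r : ℝ) :
    Metric.closedBall p r ⊆ box (‖p‖ + r) (min (y1 p) (y2 p) - r) (‖p‖ + r) := by
  intro q hq
  rw [Metric.mem_closedBall, dist_eq_norm] at hq
  obtain ⟨hx1, hx2, hy1, hy2⟩ := abs_coords_le_norm q
  obtain ⟨-, -, hy1', hy2'⟩ := abs_coords_le_norm (q - p)
  have hy1' : |y1 q - y1 p| ≤ r := hy1'.trans hq
  have hy2' : |y2 q - y2 p| ≤ r := hy2'.trans hq
  have hq : ‖q‖ ≤ ‖p‖ + r := by linarith [norm_sub_norm_le q p]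
  rw [abs_le] at hy1 hy2 hy1' hy2'
  refine mem_box.mpr ⟨hx1.trans hq, hx2.trans hq, ?_, ?_, ?_, ?_⟩ <;>
    linarith [min_le_left (y1 p) (y2 p), min_le_right (y1 p) (y2 p)]

section Fundamental

variable {k : ℕ} {ε : ℝ}

theorem x1_eq_and_x2_eq (hk1 : 1 < k) (z : Pt) :
    x1 z = s1 k z + s2 k z * omg k ∧ x2 z = s1 k z + s2 k z * omg' k := by
  have h := sub_ne_zero.mpr (omg'_lt_omg hk1).ne'
  have h' := sub_ne_zero.mpr (omg'_lt_omg hk1).ne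
  constructor <;> (unfold s1 s2; field_simp; ring)

theorem mem_box_of_mem_F (hk1 : 1 < k) (hε : ε ≠ 0) {z : Pt} (hz : z ∈ F k ε) {b B : ℝ}
    (hb : b ≤ hh z) (hB : hh z ≤ B) :
    z ∈ box ((1 + |omg k| + |omg' k|) / 2) (√(b / ε ^ 2)) (√(B * ε ^ 2)) := by
  obtain ⟨⟨hzH, hs1, hs2, hr1, hr2⟩, -⟩ := hz
  have hε2 : 0 < ε ^ 2 := by positivity
  have hh0 : 0 < hh z := mul_pos hzH.1 hzH.2
  have hr : 0 < rr z := div_pos hzH.1 hzH.2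
  have hy1 : y1 z ^ 2 = hh z * rr z := by unfold hh rr; field_simp [hzH.2.ne']
  have hy2 : y2 z ^ 2 = hh z / rr z := by unfold hh rr; field_simp [hzH.1.ne', hzH.2.ne']
  have hr1' : 1 / ε ^ 2 ≤ rr z := by rwa [one_div]
  have hr2' : 1 / rr z ≤ ε ^ 2 := by rwa [one_div, inv_le_comm₀ hr hε2]
  have hy1l : b / ε ^ 2 ≤ y1 z ^ 2 := by
    rw [hy1, div_eq_mul_one_div]; exact mul_le_mul hb hr1' (by positivity) hh0.le
  have hy1u : y1 z ^ 2 ≤ B * ε ^ 2 := by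
    rw [hy1]; exact mul_le_mul hB hr2 hr.le (hh0.le.trans hB)
  have hy2l : b / ε ^ 2 ≤ y2 z ^ 2 := by
    rw [hy2]; exact div_le_div₀ hh0.le hb hr hr2
  have hy2u : y2 z ^ 2 ≤ B * ε ^ 2 := by
    rw [hy2, div_eq_mul_one_div]; exact mul_le_mul hB hr2' (by positivity) (hh0.le.trans hB)
  have hx : ∀ w s₁ s₂ : ℝ, |s₁| ≤ 1 / 2 → |s₂| ≤ 1 / 2 → |w| ≤ |omg k| + |omg' k| →
      |s₁ + s₂ * w| ≤ (1 + |omg k| + |omg' k|) / 2 := by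
    intro w s₁ s₂ h₁ h₂ hw
    calc |s₁ + s₂ * w| ≤ |s₁| + |s₂| * |w| := (abs_add_le _ _).trans_eq (by rw [abs_mul])
      _ ≤ 1 / 2 + 1 / 2 * (|omg k| + |omg' k|) := by gcongr
      _ = _ := by ring
  obtain ⟨hx1, hx2⟩ := x1_eq_and_x2_eq hk1 z
  rw [mem_box, hx1, hx2]
  refine ⟨hx _ _ _ hs1 hs2 (le_add_of_nonneg_right (abs_nonneg _)),
    hx _ _ _ hs1 hs2 (le_add_of_nonneg_left (abs_nonneg _)), ?_, ?_, ?_, ?_⟩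
  · exact (Real.sqrt_le_sqrt hy1l).trans_eq (Real.sqrt_sq hzH.1.le)
  · exact (Real.sqrt_sq hzH.1.le).symm.trans_le (Real.sqrt_le_sqrt hy1u)
  · exact (Real.sqrt_le_sqrt hy2l).trans_eq (Real.sqrt_sq hzH.2.le)
  · exact (Real.sqrt_sq hzH.2.le).symm.trans_le (Real.sqrt_le_sqrt hy2u)

end Fundamental

section Finiteness

variable {k : ℕ} {ε : ℝ}

theorem exists_box_of_act_mem_box (hk : Squarefree k) (hk1 : 1 < k) (hε : ε ≠ 0)
    (X : ℝ) {η : ℝ} (hη : 0 < η) (Y : ℝ) :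
    ∃ X' m Y', 0 < m ∧ ∀ (g : SL k), ∀ z ∈ F k ε, act k g z ∈ box X η Y → z ∈ box X' m Y' := by
  refine ⟨(1 + |omg k| + |omg' k|) / 2, √(η ^ 2 / ε ^ 2), √(Y ^ 2 / min 1 (η ^ 4) * ε ^ 2),
    Real.sqrt_pos.mpr (by positivity), fun g z hz hq => ?_⟩
  obtain ⟨-, -, hy1, hy1', hy2, hy2'⟩ := mem_box.mp hq
  have hηq : η ^ 2 ≤ hh (act k g z) := by
    rw [sq]; exact mul_le_mul hy1 hy2 hη.le (hη.trans_le hy1).le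
  have hqY : hh (act k g z) ≤ Y ^ 2 := by
    rw [sq]; exact mul_le_mul hy1' hy2' (hη.trans_le hy2).le ((hη.trans_le hy1).le.trans hy1')
  refine mem_box_of_mem_F hk1 hε hz (hηq.trans (hh_act_le g hz.2)) ?_
  rw [le_div_iff₀ (by positivity)]
  calc hh z * min 1 (η ^ 4) ≤ hh z * min 1 (hh (act k g z) ^ 2) := by
        have : η ^ 4 ≤ hh (act k g z) ^ 2 := by
          rw [show η ^ 4 = (η ^ 2) ^ 2 by ring]; gcongr
        exact mul_le_mul_of_nonneg_left (min_le_min_left 1 this) (mul_pos hz.1.1.1 hz.1.1.2).le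
    _ ≤ hh (act k g z) := hh_mul_min_le_hh_act hk hk1 g hz.1.1
    _ ≤ Y ^ 2 := hqY

theorem finite_SL_of_abs_coe_le (hk1 : 1 < k) (A : ℝ) :
    {g : SL k | ∀ i j, |(g.1 i j : ℝ × ℝ).1| ≤ A ∧ |(g.1 i j : ℝ × ℝ).2| ≤ A}.Finite := by
  have hpi := Set.Finite.pi fun _ : Fin 2 => Set.Finite.pi fun _ : Fin 2 =>
    finite_setOf_abs_coe_le hk1 A
  exact (hpi.preimage Subtype.val_injective.injOn).subset fun g hg i _ j _ => hg i j

theorem finite_setOf_box_inter_act_image_nonempty (hk : Squarefree k) (hk1 : 1 < k)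
    (hε : ε ≠ 0) (X : ℝ) {η : ℝ} (hη : 0 < η) (Y : ℝ) :
    {g : SL k | (box X η Y ∩ act k g '' F k ε).Nonempty}.Finite := by
  obtain ⟨X', m, Y', hm, hF⟩ := exists_box_of_act_mem_box hk hk1 hε X hη Y
  obtain ⟨A, hA⟩ := exists_abs_le_of_moeb_mem (max X X') (min η m) (max Y Y') (lt_min hη hm)
  refine (finite_SL_of_abs_coe_le hk1 A).subset ?_
  rintro g ⟨_, hq, z, hz, rfl⟩
  have hbig : box X η Y ⊆ box (max X X') (min η m) (max Y Y') :=
    box_mono (le_max_left _ _) (min_le_left _ _) (le_max_left _ _)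
  have hbig' : box X' m Y' ⊆ box (max X X') (min η m) (max Y Y') :=
    box_mono (le_max_right _ _) (min_le_right _ _) (le_max_right _ _)
  obtain ⟨hx1, hx2, hy1, hy1', hy2, hy2'⟩ := mem_box.mp (hbig' (hF g z hz hq))
  obtain ⟨hx1', hx2', hy1'', hy1''', hy2'', hy2'''⟩ := mem_box.mp (hbig hq)
  obtain ⟨a₁, b₁, c₁, d₁⟩ := hA _ _ _ _ _ _ (det_coe g).1 hx1 hy1 hy1' hx1' hy1'' hy1'''
  obtain ⟨a₂, b₂, c₂, d₂⟩ := hA _ _ _ _ _ _ (det_coe g).2 hx2 hy2 hy2' hx2' hy2'' hy2'''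
  intro i j
  fin_cases i <;> fin_cases j
  exacts [⟨a₁, a₂⟩, ⟨b₁, b₂⟩, ⟨c₁, c₂⟩, ⟨d₁, d₂⟩]

end Finiteness

section Closedness

variable {k : ℕ} {ε : ℝ}

theorem continuousOn_act (g : SL k) : ContinuousOn (act k g) HH := by
  intro z hz
  have h1 := (moeb_den_pos (x := x1 z) (det_coe g).1 hz.1).ne'
  have h2 := (moeb_den_pos (x := x2 z) (det_coe g).2 hz.2).ne'
  apply ContinuousAt.continuousWithinAt
  unfold act moeb x1 x2 y1 y2 at *
  fun_prop (disch := assumption)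

theorem isClosed_F_inter {K : Set Pt} (hK : IsClosed K) (hKH : K ⊆ HH) :
    IsClosed (F k ε ∩ K) := by
  have hrr : IsClosed (K ∩ rr ⁻¹' Set.Icc (ε ^ 2)⁻¹ (ε ^ 2)) := by
    refine ContinuousOn.preimage_isClosed_of_isClosed ?_ hK isClosed_Icc
    unfold rr y1 y2
    exact ContinuousOn.div (by fun_prop) (by fun_prop) fun z hz => (hKH hz).2.ne'
  have hs : IsClosed ({z | |s1 k z| ≤ 1 / 2} ∩ {z | |s2 k z| ≤ 1 / 2}) := by
    unfold s1 s2 x1 x2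
    exact (isClosed_le (by fun_prop) continuous_const).inter
      (isClosed_le (by fun_prop) continuous_const)
  have hN : IsClosed {z | ∀ cd ∈ Spairs k, 1 ≤ HNorm (cd.1 : ℝ × ℝ) (cd.2 : ℝ × ℝ) z} := by
    simp only [Set.ofPred_forall]
    refine isClosed_iInter fun cd => isClosed_iInter fun _ => isClosed_le continuous_const ?_
    unfold HNorm x1 x2 y1 y2; fun_prop
  convert (hrr.inter hs).inter hN using 1
  ext z
  constructor
  · rintro ⟨⟨⟨hz, hs1, hs2, hr1, hr2⟩, -, hN⟩, hzK⟩
    exact ⟨⟨⟨hzK, hr1, hr2⟩, hs1, hs2⟩, hN⟩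
  · rintro ⟨⟨⟨hzK, hr1, hr2⟩, hs1, hs2⟩, hN⟩
    exact ⟨⟨⟨hKH hzK, hs1, hs2, hr1, hr2⟩, hKH hzK, hN⟩, hzK⟩

theorem isClosed_box_inter_act_image (hk : Squarefree k) (hk1 : 1 < k) (hε : ε ≠ 0)
    (X : ℝ) {η : ℝ} (hη : 0 < η) (Y : ℝ) (g : SL k) :
    IsClosed (box X η Y ∩ act k g '' F k ε) := by
  obtain ⟨X', m, Y', hm, hF⟩ := exists_box_of_act_mem_box hk hk1 hε X hη Y
  have hK : IsCompact (F k ε ∩ box X' m Y') :=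
    isCompact_Icc.of_isClosed_subset (isClosed_F_inter isClosed_Icc (box_subset_HH hm))
      Set.inter_subset_right
  have himage : box X η Y ∩ act k g '' F k ε = box X η Y ∩ act k g '' (F k ε ∩ box X' m Y') := by
    refine subset_antisymm ?_
      (Set.inter_subset_inter_right _ (Set.image_mono Set.inter_subset_left))
    rintro _ ⟨hq, z, hz, rfl⟩
    exact ⟨hq, z, ⟨hz, hF g z hz hq⟩, rfl⟩
  rw [himage]
  exact isClosed_Icc.inter (hK.image_of_continuousOn ((continuousOn_act g).mono
    (Set.inter_subset_right.trans (box_subset_HH hm)))).isClosed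

end Closedness

theorem exists_pos_forall_ball_inter_nonempty_imp_mem {X ι : Type*} [PseudoMetricSpace X]
    {p : X} {U : Set X} (hU : U ∈ nhds p) {S : ι → Set X}
    (hfin : {i | (U ∩ S i).Nonempty}.Finite) (hclosed : ∀ i, IsClosed (U ∩ S i)) :
    ∃ lam > (0 : ℝ), ∀ i, (Metric.ball p lam ∩ S i).Nonempty → p ∈ S i := by
  obtain ⟨r, hr, hrU⟩ := Metric.mem_nhds_iff.mp hU
  set C := ⋃ i ∈ {i | (U ∩ S i).Nonempty ∧ p ∉ S i}, U ∩ S i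
  have hC : IsClosed C := (hfin.subset fun _ hi => hi.1).isClosed_biUnion fun i _ => hclosed i
  have hpC : p ∉ C := by
    simp only [C, Set.mem_iUnion]
    rintro ⟨i, ⟨-, hpi⟩, -, hpi'⟩
    exact hpi hpi'
  obtain ⟨δ, hδ, hδC⟩ := Metric.isOpen_iff.mp hC.isOpen_compl p hpC
  refine ⟨min r δ, lt_min hr hδ, fun i ⟨q, hq, hqS⟩ => ?_⟩
  by_contra hpS
  have hqU : q ∈ U := hrU (Metric.ball_subset_ball (min_le_left _ _) hq)
  exact hδC (Metric.ball_subset_ball (min_le_right _ _) hq)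
    (Set.mem_biUnion ⟨⟨q, hqU, hqS⟩, hpS⟩ ⟨hqU, hqS⟩)

/-- For every `Z ∈ H²×H²` there exists `λ > 0` such that for every `g ∈ Γ`,
if the open ball `B(Z,λ)` meets `g(F)` then `Z ∈ g(F)`. -/
theorem exists_ball_meets_imp_mem (k : ℕ) (hk : Squarefree k) (hk1 : 1 < k)
    (e : (R k)ˣ) (he : IsFundUnit k e) (p : Pt) (hp : p ∈ HH) :
    ∃ lam > (0 : ℝ), ∀ g : SL k,
      (Metric.ball p lam ∩ act k g '' F k (eps k e)).Nonempty →
        p ∈ act k g '' F k (eps k e) := by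
  have hε : eps k e ≠ 0 := (zero_lt_one.trans he.1).ne'
  set η := min (y1 p) (y2 p) / 2
  have hη : 0 < η := half_pos (lt_min hp.1 hp.2)
  have hU : box (‖p‖ + η) η (‖p‖ + η) ∈ nhds p := by
    refine Filter.mem_of_superset (Metric.closedBall_mem_nhds p hη) ?_
    convert closedBall_subset_box p η using 2
    ring
  exact exists_pos_forall_ball_inter_nonempty_imp_mem hU
    (finite_setOf_box_inter_act_image_nonempty hk hk1 hε _ hη _)
    (isClosed_box_inter_act_image hk hk1 hε _ hη _)

end Hilbert
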